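/- Let α₀ > 0, α₁ ∈ (0, π/2], θ > 0, f, g ∈ {sin, cos}, and λ ∈ ℂ \ {0} with θ|Re λ| ≤ α₀ and dist(θ|Re λ|, real zero set of g) ≥ α₁. Then |λ| ∫₀^θ |f(λφ)|²/|g(λθ)|² dφ ≤ max{ 2α₀ cosh²(α₀)/sin²(α₁), (α₀ + sinh(α₀) cosh(α₀))/sinh²(α₀) }. -/

import Mathlib

/-!
Write `λ = a + b i`. Since `|sin z|² = sin² x + sinh² y` and `|cos z|² = cos² x + sinh² y` for
`z = x + y i`, the numerator is at most `cosh² (b φ)`, whose integral over `(0, θ)` is explicit,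
while `|g(λθ)|²` is at least both `g(aθ)²` and `sinh² (bθ)`. The distance hypothesis bounds
`|g(θ |a|)|` below by `sin α₁`, as `g` vanishes at the nearest real zero and is, up to sign, the
sine of the distance to it. If `θ |b| ≤ α₀` this gives the first bound, using `|λ| θ ≤ 2 α₀`;
otherwise `|λ| ≤ 2 |b|` and the estimate becomes `h(θ |b|)` for the decreasing function
`h(t) = (t + sinh t cosh t) / sinh² t`, whence the second bound.
-/

open Real Set MeasureTheory

namespace Complex

lemma sq_norm_sin (z : ℂ) : ‖sin z‖ ^ 2 = Real.sin z.re ^ 2 + Real.sinh z.im ^ 2 := by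
  conv_lhs => rw [← re_add_im z]
  rw [sin_add_mul_I, ← ofReal_sin, ← ofReal_cos, ← ofReal_sinh, ← ofReal_cosh,
    ← ofReal_mul, ← ofReal_mul, Complex.sq_norm, normSq_add_mul_I]
  linear_combination Real.sin z.re ^ 2 * Real.cosh_sq' z.im
    + Real.sinh z.im ^ 2 * Real.sin_sq_add_cos_sq z.re

lemma sq_norm_cos (z : ℂ) : ‖cos z‖ ^ 2 = Real.cos z.re ^ 2 + Real.sinh z.im ^ 2 := by
  conv_lhs => rw [← re_add_im z]
  rw [cos_add_mul_I, ← ofReal_sin, ← ofReal_cos, ← ofReal_sinh, ← ofReal_cosh,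
    ← ofReal_mul, ← ofReal_mul, sub_eq_add_neg, ← neg_mul, ← ofReal_neg, Complex.sq_norm,
    normSq_add_mul_I]
  linear_combination Real.cos z.re ^ 2 * Real.cosh_sq' z.im
    + Real.sinh z.im ^ 2 * Real.sin_sq_add_cos_sq z.re

end Complex

namespace Real

lemma sin_le_abs_sin_of_le_dist_zeros {α A : ℝ} (hα : -(π / 2) ≤ α)
    (h : ∀ x, sin x = 0 → α ≤ |A - x|) : sin α ≤ |sin A| := by
  set k := round (A / π)
  have hnear : |A - k * π| ≤ π / 2 := by
    calc |A - k * π| = |(A / π - k) * π| := by rw [sub_mul, div_mul_cancel₀ _ pi_ne_zero]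
      _ = |A / π - k| * π := by rw [abs_mul, abs_of_pos pi_pos]
      _ ≤ 1 / 2 * π := by gcongr; exact abs_sub_round _
      _ = π / 2 := by ring
  calc sin α ≤ sin |A - k * π| :=
        sin_le_sin_of_le_of_le_pi_div_two hα hnear (h _ (sin_int_mul_pi k))
    _ = |sin (A - k * π)| := (abs_sin_eq_sin_abs_of_abs_le_pi (by linarith [pi_pos])).symm
    _ = |sin A| := by
        rw [sin_sub_int_mul_pi, abs_mul, abs_zpow, abs_neg, abs_one, one_zpow, one_mul]

lemma sin_le_abs_cos_of_le_dist_zeros {α A : ℝ} (hα : -(π / 2) ≤ α)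
    (h : ∀ x, cos x = 0 → α ≤ |A - x|) : sin α ≤ |cos A| := by
  rw [← sin_add_pi_div_two]
  refine sin_le_abs_sin_of_le_dist_zeros hα fun y hy => ?_
  rw [show A + π / 2 - y = A - (y - π / 2) by ring]
  exact h _ (by rwa [cos_sub_pi_div_two])

lemma integral_cosh_mul_sq {c : ℝ} (hc : c ≠ 0) (θ : ℝ) :
    ∫ φ in (0)..θ, cosh (c * φ) ^ 2 = θ / 2 + sinh (c * θ) * cosh (c * θ) / (2 * c) := by
  have hderiv (φ : ℝ) : HasDerivAt (fun φ => φ / 2 + sinh (c * φ) * cosh (c * φ) / (2 * c))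
      (cosh (c * φ) ^ 2) φ := by
    have hlin : HasDerivAt (fun φ => c * φ) c φ := by simpa using (hasDerivAt_id φ).const_mul c
    have hsinh : HasDerivAt (fun φ => sinh (c * φ)) (cosh (c * φ) * c) φ :=
      (hasDerivAt_sinh _).comp φ hlin
    have hcosh : HasDerivAt (fun φ => cosh (c * φ)) (sinh (c * φ) * c) φ :=
      (hasDerivAt_cosh _).comp φ hlin
    refine (((hasDerivAt_id φ).div_const 2).add ((hsinh.mul hcosh).div_const (2 * c))).congr_deriv ?_
    field_simp
    linear_combination -cosh_sq' (c * φ)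
  rw [intervalIntegral.integral_eq_sub_of_hasDerivAt (fun φ _ => hderiv φ)
    ((by fun_prop : Continuous fun φ => cosh (c * φ) ^ 2).intervalIntegrable _ _)]
  simp

lemma integral_cosh_mul_sq_le {c θ α : ℝ} (hc : 0 ≤ c) (hθ : 0 ≤ θ) (hα : c * θ ≤ α) :
    ∫ φ in (0)..θ, cosh (c * φ) ^ 2 ≤ θ * cosh α ^ 2 := by
  calc ∫ φ in (0)..θ, cosh (c * φ) ^ 2 ≤ ∫ _ in (0)..θ, cosh α ^ 2 := by
        refine intervalIntegral.integral_mono_on hθ ((by fun_prop : Continuous fun φ =>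
          cosh (c * φ) ^ 2).intervalIntegrable _ _) intervalIntegrable_const fun φ hφ => ?_
        have : |c * φ| ≤ |α| := by
          rw [abs_of_nonneg (mul_nonneg hc hφ.1), abs_of_nonneg ((mul_nonneg hc hθ).trans hα)]
          exact (mul_le_mul_of_nonneg_left hφ.2 hc).trans hα
        gcongr
        exact cosh_le_cosh.2 this
    _ = θ * cosh α ^ 2 := by simp

lemma hasDerivAt_add_sinh_mul_cosh_div_sinh_sq {x : ℝ} (hx : x ≠ 0) :
    HasDerivAt (fun x => (x + sinh x * cosh x) / sinh x ^ 2)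
      (-2 * x * cosh x / sinh x ^ 3) x := by
  have hnum : HasDerivAt (fun x => x + sinh x * cosh x)
      (1 + (cosh x * cosh x + sinh x * sinh x)) x :=
    (hasDerivAt_id x).add ((hasDerivAt_sinh x).mul (hasDerivAt_cosh x))
  have hden : HasDerivAt (fun x => sinh x ^ 2) (2 * sinh x * cosh x) x := by
    simpa using (hasDerivAt_sinh x).fun_pow 2
  have hs : sinh x ≠ 0 := sinh_ne_zero.2 hx
  refine (hnum.div hden (pow_ne_zero 2 hs)).congr_deriv ?_
  field_simp
  linear_combination (-sinh x) * cosh_sq' x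

lemma antitoneOn_add_sinh_mul_cosh_div_sinh_sq :
    AntitoneOn (fun x => (x + sinh x * cosh x) / sinh x ^ 2) (Ioi 0) := by
  have hderiv (x : ℝ) (hx : x ∈ Ioi 0) := hasDerivAt_add_sinh_mul_cosh_div_sinh_sq hx.out.ne'
  refine antitoneOn_of_deriv_nonpos (convex_Ioi 0)
    (fun x hx => (hderiv x hx).continuousAt.continuousWithinAt)
    (fun x hx => (hderiv x (interior_subset hx)).differentiableAt.differentiableWithinAt)
    fun x hx => ?_
  rw [interior_Ioi] at hx
  have hx' : 0 < x := hx
  have := sinh_pos_iff.2 hx'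
  have := cosh_pos x
  rw [(hderiv x hx).deriv, neg_mul, neg_mul, neg_div]
  exact neg_nonpos.2 (by positivity)

end Real

section SinOrCos

variable {f : ℂ → ℂ}

lemma sq_norm_eq_sq_norm_re_add_sinh_sq (hf : f = Complex.sin ∨ f = Complex.cos) (z : ℂ) :
    ‖f z‖ ^ 2 = ‖f z.re‖ ^ 2 + sinh z.im ^ 2 := by
  rcases hf with rfl | rfl
  · rw [Complex.sq_norm_sin, ← Complex.ofReal_sin, Complex.norm_real, norm_eq_abs, sq_abs]
  · rw [Complex.sq_norm_cos, ← Complex.ofReal_cos, Complex.norm_real, norm_eq_abs, sq_abs]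

lemma norm_apply_ofReal_le_one (hf : f = Complex.sin ∨ f = Complex.cos) (x : ℝ) :
    ‖f x‖ ≤ 1 := by
  rcases hf with rfl | rfl
  · simpa [← Complex.ofReal_sin] using abs_sin_le_one x
  · simpa [← Complex.ofReal_cos] using abs_cos_le_one x

lemma norm_apply_ofReal_abs (hf : f = Complex.sin ∨ f = Complex.cos) (x : ℝ) :
    ‖f (|x| : ℝ)‖ = ‖f x‖ := by
  rcases abs_choice x with h | h <;> rcases hf with rfl | rfl <;> simp [h]

lemma sq_norm_le_cosh_sq_im (hf : f = Complex.sin ∨ f = Complex.cos) (z : ℂ) :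
    ‖f z‖ ^ 2 ≤ cosh z.im ^ 2 := by
  rw [sq_norm_eq_sq_norm_re_add_sinh_sq hf, cosh_sq']
  gcongr
  exact pow_le_one₀ (norm_nonneg _) (norm_apply_ofReal_le_one hf _)

lemma sinh_sq_im_le_sq_norm (hf : f = Complex.sin ∨ f = Complex.cos) (z : ℂ) :
    sinh z.im ^ 2 ≤ ‖f z‖ ^ 2 := by
  rw [sq_norm_eq_sq_norm_re_add_sinh_sq hf]
  exact le_add_of_nonneg_left (sq_nonneg _)

lemma norm_apply_re_le_norm (hf : f = Complex.sin ∨ f = Complex.cos) (z : ℂ) :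
    ‖f z.re‖ ≤ ‖f z‖ := by
  refine (pow_le_pow_iff_left₀ (norm_nonneg _) (norm_nonneg _) two_ne_zero).1 ?_
  rw [sq_norm_eq_sq_norm_re_add_sinh_sq hf z]
  exact le_add_of_nonneg_right (sq_nonneg _)

lemma sin_le_norm_apply_of_le_dist_zeros (hf : f = Complex.sin ∨ f = Complex.cos)
    {α A : ℝ} (hα : -(π / 2) ≤ α) (h : ∀ x : ℝ, f x = 0 → α ≤ |A - x|) : sin α ≤ ‖f A‖ := by
  rcases hf with rfl | rfl
  · rw [← Complex.ofReal_sin, Complex.norm_real, norm_eq_abs]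
    exact sin_le_abs_sin_of_le_dist_zeros hα fun x hx =>
      h x (by rw [← Complex.ofReal_sin, hx, Complex.ofReal_zero])
  · rw [← Complex.ofReal_cos, Complex.norm_real, norm_eq_abs]
    exact sin_le_abs_cos_of_le_dist_zeros hα fun x hx =>
      h x (by rw [← Complex.ofReal_cos, hx, Complex.ofReal_zero])

variable {lam : ℂ} {θ : ℝ}

lemma setIntegral_sq_norm_apply_mul_le (hf : f = Complex.sin ∨ f = Complex.cos) (hθ : 0 ≤ θ) :
    ∫ φ in Ioo 0 θ, ‖f (lam * φ)‖ ^ 2 ≤ ∫ φ in (0)..θ, cosh (|lam.im| * φ) ^ 2 := by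
  rw [intervalIntegral.integral_of_le hθ, integral_Ioc_eq_integral_Ioo]
  have hf_cont : Continuous f := by rcases hf with rfl | rfl <;> fun_prop
  refine setIntegral_mono_on ((by fun_prop : Continuous fun φ : ℝ => ‖f (lam * φ)‖ ^ 2)
    |>.integrableOn_Icc.mono_set Ioo_subset_Icc_self) ((by fun_prop : Continuous fun φ =>
    cosh (|lam.im| * φ) ^ 2).integrableOn_Icc.mono_set Ioo_subset_Icc_self)
    measurableSet_Ioo fun φ hφ => ?_
  have hφ_abs : |lam.im| * φ = |(lam * φ).im| := by simp [abs_mul, abs_of_pos hφ.1]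
  rw [hφ_abs, cosh_abs]
  exact sq_norm_le_cosh_sq_im hf _

lemma sinh_sq_le_sq_norm_apply_mul (hf : f = Complex.sin ∨ f = Complex.cos) (hθ : 0 ≤ θ) :
    sinh (|lam.im| * θ) ^ 2 ≤ ‖f (lam * θ)‖ ^ 2 := by
  have hθ_abs : |lam.im| * θ = |(lam * θ).im| := by simp [abs_mul, abs_of_nonneg hθ]
  rw [hθ_abs, sinh_sq, cosh_abs, ← sinh_sq]
  exact sinh_sq_im_le_sq_norm hf _

lemma sin_le_norm_apply_mul (hf : f = Complex.sin ∨ f = Complex.cos) (hθ : 0 ≤ θ) {α : ℝ}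
    (hα : -(π / 2) ≤ α) (h : ∀ x : ℝ, f x = 0 → α ≤ |θ * |lam.re| - x|) :
    sin α ≤ ‖f (lam * θ)‖ := by
  have hθ_abs : θ * |lam.re| = |(lam * θ).re| := by simp [abs_mul, abs_of_nonneg hθ, mul_comm]
  calc sin α ≤ ‖f ↑(θ * |lam.re|)‖ := sin_le_norm_apply_of_le_dist_zeros hf hα h
    _ ≤ ‖f (lam * θ)‖ := by
        rw [hθ_abs, norm_apply_ofReal_abs hf]
        exact norm_apply_re_le_norm hf _

end SinOrCos

theorem stmt_11_general (α₀ α₁ θ : ℝ) (hα₀ : 0 < α₀) (hα₁ : α₁ ∈ Set.Ioc 0 (Real.pi / 2))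
    (hθ : 0 < θ) (f g : ℂ → ℂ)
    (hf : f = Complex.sin ∨ f = Complex.cos)
    (hg : g = Complex.sin ∨ g = Complex.cos)
    (lam : ℂ) (hre : θ * |lam.re| ≤ α₀)
    (hdist : ∀ x : ℝ, g x = 0 → α₁ ≤ |θ * |lam.re| - x|) :
    ‖lam‖ *
        ∫ φ in Set.Ioo (0 : ℝ) θ,
          ‖f (lam * φ)‖ ^ 2 / ‖g (lam * θ)‖ ^ 2
      ≤ max (2 * α₀ * Real.cosh α₀ ^ 2 / Real.sin α₁ ^ 2)
          ((α₀ + Real.sinh α₀ * Real.cosh α₀) / Real.sinh α₀ ^ 2) := by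
  obtain ⟨hα₁_pos, hα₁_le⟩ := hα₁
  have hsin_pos : 0 < sin α₁ := sin_pos_of_pos_of_lt_pi hα₁_pos (by linarith [pi_pos])
  have hnum := setIntegral_sq_norm_apply_mul_le (lam := lam) hf hθ.le
  have hnorm := Complex.norm_le_abs_re_add_abs_im lam
  rw [integral_div]
  by_cases hsmall : |lam.im| * θ ≤ α₀
  · refine le_max_of_le_left ?_
    calc _ ≤ (2 * α₀ / θ) * (θ * cosh α₀ ^ 2 / sin α₁ ^ 2) := by
          gcongr
          · rw [le_div_iff₀ hθ]; nlinarith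
          · exact hnum.trans (integral_cosh_mul_sq_le (abs_nonneg _) hθ.le hsmall)
          · exact sin_le_norm_apply_mul hg hθ.le (by linarith) hdist
      _ = 2 * α₀ * cosh α₀ ^ 2 / sin α₁ ^ 2 := by field_simp
  · refine le_max_of_le_right ?_
    push Not at hsmall
    have hb : 0 < |lam.im| := abs_pos.2 fun h => by simp [h] at hsmall; linarith
    have hre_lt_im := lt_of_mul_lt_mul_right (by linarith : |lam.re| * θ < |lam.im| * θ) hθ.le
    calc _ ≤ (2 * |lam.im|) * ((∫ φ in (0)..θ, cosh (|lam.im| * φ) ^ 2)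
            / sinh (|lam.im| * θ) ^ 2) := by
          gcongr ?_ * (?_ / ?_)
          · linarith
          · exact intervalIntegral.integral_nonneg hθ.le fun _ _ => sq_nonneg _
          · exact sinh_sq_le_sq_norm_apply_mul hg hθ.le
      _ = (|lam.im| * θ + sinh (|lam.im| * θ) * cosh (|lam.im| * θ))
            / sinh (|lam.im| * θ) ^ 2 := by
          rw [Real.integral_cosh_mul_sq hb.ne']
          field_simp
      _ ≤ _ := antitoneOn_add_sinh_mul_cosh_div_sinh_sq hα₀ (hα₀.trans hsmall) hsmall.le

theorem stmt_11 (α₀ α₁ θ : ℝ) (hα₀ : 0 < α₀) (hα₁ : α₁ ∈ Set.Ioc 0 (Real.pi / 2))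
    (hθ : 0 < θ) (f g : ℂ → ℂ)
    (hf : f = Complex.sin ∨ f = Complex.cos)
    (hg : g = Complex.sin ∨ g = Complex.cos)
    (lam : ℂ) (hlam : lam ≠ 0) (hre : θ * |lam.re| ≤ α₀)
    (hdist : ∀ x : ℝ, g x = 0 → α₁ ≤ |θ * |lam.re| - x|) :
    ‖lam‖ *
        ∫ φ in Set.Ioo (0 : ℝ) θ,
          ‖f (lam * φ)‖ ^ 2 / ‖g (lam * θ)‖ ^ 2
      ≤ max (2 * α₀ * Real.cosh α₀ ^ 2 / Real.sin α₁ ^ 2)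
          ((α₀ + Real.sinh α₀ * Real.cosh α₀) / Real.sinh α₀ ^ 2) :=
  stmt_11_general α₀ α₁ θ hα₀ hα₁ hθ f g hf hg lam hre hdist
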